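/- arXiv:1303.3016 — 4 statements merged into one kernel-verified Lean document; each statement's English description precedes it below -/
import Mathlib

section
/- For every ε ∈ [0,1) and every positive integer n, there exists a unique x > 0 satisfying arctan(x) − (1−ε)x + nπ = 0; moreover this root satisfies nπ < (1−ε)x < nπ + π/2. -/
/-- For every ε ∈ [0,1) and every positive integer n there is a unique x > 0
with arctan(x) − (1−ε)x + nπ = 0, and this root satisfies
nπ < (1−ε)x < nπ + π/2. -/
theorem unique_positive_root_higher (ε : ℝ) (hε : ε ∈ Set.Ico (0:ℝ) 1)
    (n : ℕ) (hn : 0 < n) :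
    (∃! x : ℝ, 0 < x ∧ Real.arctan x - (1 - ε) * x + n * Real.pi = 0) ∧
    ∀ x : ℝ, 0 < x → Real.arctan x - (1 - ε) * x + n * Real.pi = 0 →
      n * Real.pi < (1 - ε) * x ∧ (1 - ε) * x < n * Real.pi + Real.pi / 2 := by
  obtain ⟨hε0, hε1⟩ := hε
  set c := 1 - ε with hc
  clear_value c
  have hc0 : 0 < c := by rw [hc]; linarith
  have hc1 : c ≤ 1 := by rw [hc]; linarith
  have hπ := Real.pi_pos
  have hπ3 := Real.pi_gt_three
  have hn1 : (1:ℝ) ≤ n := by exact_mod_cast hn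
  set g : ℝ → ℝ := fun x => Real.arctan x - c * x + n * Real.pi with hg
  clear_value g
  have hgx : ∀ x : ℝ, g x = Real.arctan x - c * x + n * Real.pi := by
    intro x; rw [hg]
  simp only [← hgx]
  have gcont : Continuous g := by
    rw [hg]
    exact (Real.continuous_arctan.sub (continuous_const.mul continuous_id)).add continuous_const
  -- bounds at any positive root
  have bounds : ∀ x : ℝ, 0 < x → g x = 0 →
      n * Real.pi < c * x ∧ c * x < n * Real.pi + Real.pi / 2 := by
    intro x hx hroot
    have h1 : 0 < Real.arctan x := by
      have := Real.arctan_strictMono hx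
      simpa using this
    have h2 : Real.arctan x < Real.pi / 2 := Real.arctan_lt_pi_div_two x
    rw [hgx] at hroot
    constructor <;> nlinarith
  -- strictly decreasing on [π/c, ∞)
  have key : StrictAntiOn g (Set.Ici (Real.pi / c)) := by
    apply strictAntiOn_of_deriv_neg (convex_Ici _) gcont.continuousOn
    intro x hx
    rw [interior_Ici] at hx
    have hx' : Real.pi / c < x := hx
    have hxpos : 0 < x := lt_trans (by positivity) hx'
    have hd : HasDerivAt g (1 / (1 + x ^ 2) - c) x := by
      have h := (Real.hasDerivAt_arctan x).sub ((hasDerivAt_id x).const_mul c)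
      have h2 := h.add_const ((n : ℝ) * Real.pi)
      rw [hg]
      simpa [mul_comm] using h2
    rw [hd.deriv]
    have hcx : Real.pi < c * x := by
      rw [div_lt_iff₀ hc0] at hx'; linarith
    have h1 : 1 / (1 + x ^ 2) < c := by
      rw [div_lt_iff₀ (by positivity)]
      nlinarith
    linarith
  -- roots lie in (π/c, ∞)
  have rootIn : ∀ x : ℝ, 0 < x → g x = 0 → Real.pi / c < x := by
    intro x hx hroot
    have hb := (bounds x hx hroot).1
    rw [div_lt_iff₀ hc0]
    nlinarith
  -- existence via IVT
  obtain ⟨B, hB0, hcB⟩ : ∃ B : ℝ, 0 ≤ B ∧ c * B = (n : ℝ) * Real.pi + Real.pi / 2 + 1 := by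
    refine ⟨((n : ℝ) * Real.pi + Real.pi / 2 + 1) / c, by positivity, ?_⟩
    field_simp
  have hgB : g B < 0 := by
    have h2 : Real.arctan B < Real.pi / 2 := Real.arctan_lt_pi_div_two B
    rw [hgx]
    linarith
  have hg0 : g 0 = (n : ℝ) * Real.pi := by rw [hgx]; simp
  have : (0:ℝ) ∈ Set.Icc (g B) (g 0) := ⟨le_of_lt hgB, by rw [hg0]; positivity⟩
  obtain ⟨x, hxmem, hxroot⟩ := intermediate_value_Icc' hB0 gcont.continuousOn this
  have hx0 : 0 < x := by
    rcases lt_or_eq_of_le hxmem.1 with h | h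
    · exact h
    · exfalso
      rw [← h] at hxroot
      rw [hg0] at hxroot
      nlinarith
  constructor
  · refine ⟨x, ⟨hx0, hxroot⟩, ?_⟩
    rintro y ⟨hy0, hyroot⟩
    exact key.injOn (le_of_lt (rootIn y hy0 hyroot)) (le_of_lt (rootIn x hx0 hxroot))
      (hyroot.trans hxroot.symm)
  · exact bounds
end

section
/- Let x₀(ε) denote the unique positive root of arctan(x) = (1−ε)x for ε ∈ (0,1). Then lim_{ε→0⁺} (x₀(ε)² − 3ε)/ε² = 27/5. Equivalently, the principal eigenvalue λ(ε) = D x₀(ε)² satisfies λ(ε) = 3Dε(1 + (9/5)ε) + o(ε²) as ε → 0⁺, which is the two-term expansion λ ∼ (4πD/|Ω|)(1 − 4πDγε)ε with |Ω| = 4π/3 and γ = −9/(20πD). -/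
open Real Filter Set Topology

/-! With `y = x ε` and `s = y²`, the alternating Taylor bounds
`y - y³/3 + y⁵/5 - y⁷/7 ≤ arctan y ≤ y - y³/3 + y⁵/5` turn the root equation into
`s/3 - s²/5 ≤ ε ≤ s/3 - s²/5 + s³/7`. Once `y < 1` is known (`arctan y / y ≤ π/4 < 1 - ε` for
`y ≥ 1`), inverting these gives `s = 3ε + (27/5)ε² + O(ε³)` with an explicit constant, and the
limit follows by squeezing. -/

theorem le_of_hasDerivAt_le_of_le {f g f' g' : ℝ → ℝ} {a x : ℝ}
    (hf : ∀ t, HasDerivAt f (f' t) t) (hg : ∀ t, HasDerivAt g (g' t) t)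
    (hfg' : ∀ t, a < t → f' t ≤ g' t) (ha : f a ≤ g a) (hx : a ≤ x) : f x ≤ g x := by
  have hmono : MonotoneOn (g - f) (Ici a) := by
    refine monotoneOn_of_hasDerivWithinAt_nonneg (f' := g' - f') (convex_Ici a) ?_ ?_ ?_
    · exact fun t _ => ((hg t).sub (hf t)).continuousAt.continuousWithinAt
    · exact fun t _ => ((hg t).sub (hf t)).hasDerivWithinAt
    · rw [interior_Ici]
      exact fun t ht => sub_nonneg.2 (hfg' t ht)
  have := hmono self_mem_Ici hx hx
  simp only [Pi.sub_apply] at this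
  linarith

theorem abs_sub_three_mul_div_sq_sub_le {ε s : ℝ} (hε : 0 < ε) (hε' : ε < 1 / 9)
    (hs : 0 ≤ s) (hs1 : s ≤ 1)
    (hlow : s / 3 - s ^ 2 / 5 ≤ ε) (hup : ε ≤ s / 3 - s ^ 2 / 5 + s ^ 3 / 7) :
    |(s - 3 * ε) / ε ^ 2 - 27 / 5| ≤ 200 * ε := by
  have hs_le : s ≤ 15 / 2 * ε := by nlinarith
  have hs_ge : 3 * ε ≤ s := by nlinarith
  have hs_le' : s ≤ 3 * ε + 135 / 4 * ε ^ 2 := by nlinarith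
  rw [abs_le, le_sub_iff_add_le, sub_le_iff_le_add, le_div_iff₀ (by positivity),
    div_le_iff₀ (by positivity)]
  constructor
  · nlinarith [pow_le_pow_left₀ hs hs_le 3, pow_le_pow_left₀ (by positivity) hs_ge 2]
  · nlinarith [pow_le_pow_left₀ hs hs_le' 2]

namespace Real

theorem arctan_le_sub_add (x : ℝ) (hx : 0 ≤ x) : arctan x ≤ x - x ^ 3 / 3 + x ^ 5 / 5 := by
  refine le_of_hasDerivAt_le_of_le (g := fun t => t - t ^ 3 / 3 + t ^ 5 / 5)
    (f' := fun t => 1 / (1 + t ^ 2)) (g' := fun t => 1 - t ^ 2 + t ^ 4) hasDerivAt_arctan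
    (fun t => ?_) (fun t _ => ?_) (by simp) hx
  · refine (((hasDerivAt_id' t).sub ((hasDerivAt_pow 3 t).div_const 3)).add
      ((hasDerivAt_pow 5 t).div_const 5)).congr_deriv ?_
    norm_num
  · have h : 1 - t ^ 2 + t ^ 4 - 1 / (1 + t ^ 2) = t ^ 6 / (1 + t ^ 2) := by
      field_simp; ring
    have : 0 ≤ t ^ 6 / (1 + t ^ 2) := by positivity
    linarith

theorem sub_add_sub_le_arctan (x : ℝ) (hx : 0 ≤ x) :
    x - x ^ 3 / 3 + x ^ 5 / 5 - x ^ 7 / 7 ≤ arctan x := by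
  refine le_of_hasDerivAt_le_of_le (f := fun t => t - t ^ 3 / 3 + t ^ 5 / 5 - t ^ 7 / 7)
    (f' := fun t => 1 - t ^ 2 + t ^ 4 - t ^ 6) (g' := fun t => 1 / (1 + t ^ 2)) (fun t => ?_)
    hasDerivAt_arctan (fun t _ => ?_) (by simp) hx
  · refine ((((hasDerivAt_id' t).sub ((hasDerivAt_pow 3 t).div_const 3)).add
      ((hasDerivAt_pow 5 t).div_const 5)).sub ((hasDerivAt_pow 7 t).div_const 7)).congr_deriv ?_
    norm_num
  · have h : 1 / (1 + t ^ 2) - (1 - t ^ 2 + t ^ 4 - t ^ 6) = t ^ 8 / (1 + t ^ 2) := by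
      field_simp; ring
    have : 0 ≤ t ^ 8 / (1 + t ^ 2) := by positivity
    linarith

theorem arctan_le_pi_div_four_mul {x : ℝ} (hx : 1 ≤ x) : arctan x ≤ π / 4 * x := by
  refine le_of_hasDerivAt_le_of_le (g' := fun _ => π / 4) hasDerivAt_arctan
    (fun t => (hasDerivAt_id t).const_mul (π / 4) |>.congr_deriv (mul_one _)) (fun t ht => ?_)
    (by simp [arctan_one]) hx
  have : 1 / (1 + t ^ 2) ≤ 1 / 2 := by
    gcongr; nlinarith
  linarith [pi_gt_three]

theorem lt_one_of_arctan_eq_mul {c y : ℝ} (hc : π / 4 < c) (hy : 0 < y)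
    (h : arctan y = c * y) : y < 1 := by
  by_contra! hy1
  have := arctan_le_pi_div_four_mul hy1
  nlinarith

theorem sq_bounds_of_arctan_eq_mul {ε y : ℝ} (hy : 0 < y) (h : arctan y = (1 - ε) * y) :
    y ^ 2 / 3 - y ^ 4 / 5 ≤ ε ∧ ε ≤ y ^ 2 / 3 - y ^ 4 / 5 + y ^ 6 / 7 := by
  have hup := h ▸ arctan_le_sub_add y hy.le
  have hlow := h ▸ sub_add_sub_le_arctan y hy.le
  constructor <;> nlinarith

theorem abs_sq_sub_div_sq_sub_le_of_arctan_eq_mul {ε y : ℝ} (hε : 0 < ε) (hε' : ε < 1 / 9)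
    (hy : 0 < y) (h : arctan y = (1 - ε) * y) :
    |(y ^ 2 - 3 * ε) / ε ^ 2 - 27 / 5| ≤ 200 * ε := by
  obtain ⟨hlow, hup⟩ := sq_bounds_of_arctan_eq_mul hy h
  have hy1 : y < 1 := lt_one_of_arctan_eq_mul (by linarith [pi_lt_d2]) hy h
  have h4 : (y ^ 2) ^ 2 = y ^ 4 := by ring
  have h6 : (y ^ 2) ^ 3 = y ^ 6 := by ring
  exact abs_sub_three_mul_div_sq_sub_le hε hε' (sq_nonneg y) (by nlinarith) (by linarith)
    (by linarith)

end Real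

/-- If for each ε ∈ (0,1), x ε is the (unique) positive root of
arctan(x) = (1−ε)x, then (x(ε)² − 3ε)/ε² → 27/5 as ε → 0⁺.
Equivalently, for every D > 0 the principal eigenvalue λ(ε) = D x(ε)²
satisfies λ(ε) = 3Dε(1 + (9/5)ε) + o(ε²) as ε → 0⁺, which is the two-term
expansion λ ∼ (4πD/|Ω|)(1 − 4πDγε)ε with |Ω| = 4π/3, γ = −9/(20πD). -/
theorem principal_eigenvalue_second_order (x : ℝ → ℝ)
    (hx : ∀ ε ∈ Set.Ioo (0:ℝ) 1, 0 < x ε ∧ Real.arctan (x ε) = (1 - ε) * x ε) :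
    Filter.Tendsto (fun ε => ((x ε) ^ 2 - 3 * ε) / ε ^ 2)
      (nhdsWithin 0 (Set.Ioi 0)) (nhds (27 / 5)) ∧
    ∀ D : ℝ, 0 < D →
      Filter.Tendsto
        (fun ε => (D * (x ε) ^ 2 - 3 * D * ε * (1 + (9 / 5) * ε)) / ε ^ 2)
        (nhdsWithin 0 (Set.Ioi 0)) (nhds 0) := by
  have hbound : ∀ᶠ ε in 𝓝[>] 0, ‖((x ε) ^ 2 - 3 * ε) / ε ^ 2 - 27 / 5‖ ≤ 200 * ε := by
    filter_upwards [Ioo_mem_nhdsGT (by norm_num : (0 : ℝ) < 1 / 9)] with ε ⟨hε, hε'⟩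
    obtain ⟨hpos, heq⟩ := hx ε ⟨hε, by linarith⟩
    exact abs_sq_sub_div_sq_sub_le_of_arctan_eq_mul hε hε' hpos heq
  have hlim : Tendsto (fun ε => ((x ε) ^ 2 - 3 * ε) / ε ^ 2) (𝓝[>] 0) (𝓝 (27 / 5)) := by
    rw [tendsto_iff_norm_sub_tendsto_zero]
    refine squeeze_zero' (.of_forall fun _ => norm_nonneg _) hbound ?_
    simpa using (continuous_const_mul (200 : ℝ)).tendsto' 0 0 (mul_zero _) |>.mono_left
      nhdsWithin_le_nhds
  refine ⟨hlim, fun D _ => ?_⟩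
  have hD : Tendsto (fun ε => D * (((x ε) ^ 2 - 3 * ε) / ε ^ 2 - 27 / 5)) (𝓝[>] 0) (𝓝 0) := by
    simpa using ((hlim.sub_const (27 / 5)).const_mul D)
  refine hD.congr' ?_
  filter_upwards [self_mem_nhdsWithin] with ε (hε : 0 < ε)
  field_simp
  ring
end

section
/- If k > 0 satisfies tan(k) = k, then ∫₀¹ (sin(kr)/(kr))² r² dr = 1/(2(1+k²)). -/
/-!
The factor `r²` cancels the denominator of `sinc² (k r)`, leaving `∫₀¹ sin² (k r) / k² dr =
(k - sin k cos k) / (2 k³)`. The condition `tan k = k` gives `sin k = k cos k` and, with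
`sin² + cos² = 1`, `cos² k = 1 / (1 + k²)`; substituting both yields `1 / (2 (1 + k²))`.
-/

open Real

/-- `tan k = sin k / cos k` takes the junk value `0` where `cos k = 0`, which `k ≠ 0` excludes. -/
lemma Real.sin_eq_mul_cos_of_tan_eq_self {k : ℝ} (hk : k ≠ 0) (htan : tan k = k) :
    sin k = k * cos k := by
  rw [tan_eq_sin_div_cos] at htan
  have hcos : cos k ≠ 0 := fun h => hk (by rw [← htan, h, div_zero])
  exact (div_eq_iff hcos).mp htan

lemma Real.cos_sq_of_tan_eq_self {k : ℝ} (hk : k ≠ 0) (htan : tan k = k) :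
    cos k ^ 2 = 1 / (1 + k ^ 2) := by
  have hsin := sin_eq_mul_cos_of_tan_eq_self hk htan
  have hpyth := sin_sq_add_cos_sq k
  rw [hsin] at hpyth
  rw [eq_div_iff (by positivity)]
  linear_combination hpyth

lemma integral_sinc_sq_mul_sq {k : ℝ} (hk : k ≠ 0) :
    (∫ r in (0:ℝ)..1, (sin (k * r) / (k * r)) ^ 2 * r ^ 2) =
      (k - sin k * cos k) / (2 * k ^ 3) := by
  have hcancel : (∫ r in (0:ℝ)..1, (sin (k * r) / (k * r)) ^ 2 * r ^ 2) =
      ∫ r in (0:ℝ)..1, sin (k * r) ^ 2 / k ^ 2 := by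
    refine intervalIntegral.integral_congr_ae (Filter.Eventually.of_forall fun r hr => ?_)
    rw [Set.uIoc_of_le zero_le_one] at hr
    have hr0 : r ≠ 0 := hr.1.ne'
    field_simp
  rw [hcancel, intervalIntegral.integral_div,
    intervalIntegral.integral_comp_mul_left (fun x => sin x ^ 2) hk, integral_sin_sq]
  simp only [mul_zero, mul_one, sin_zero, cos_zero, smul_eq_mul]
  field_simp
  ring

/-- If k > 0 satisfies tan(k) = k, then ∫₀¹ (sin(kr)/(kr))² r² dr = 1/(2(1+k²)). -/
theorem sinc_eigenfunction_normalization (k : ℝ) (hk : 0 < k)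
    (htan : Real.tan k = k) :
    (∫ r in (0:ℝ)..1, (Real.sin (k * r) / (k * r)) ^ 2 * r ^ 2) =
      1 / (2 * (1 + k ^ 2)) := by
  have hsin := sin_eq_mul_cos_of_tan_eq_self hk.ne' htan
  have hcos := cos_sq_of_tan_eq_self hk.ne' htan
  rw [integral_sinc_sq_mul_sq hk.ne', hsin]
  calc (k - k * cos k * cos k) / (2 * k ^ 3) = (1 - cos k ^ 2) / (2 * k ^ 2) := by
        field_simp
    _ = 1 / (2 * (1 + k ^ 2)) := by
        rw [hcos]
        field_simp
        ring
end

section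
/- For each positive integer n let kₙ denote the unique root of tan(k) = k in (nπ, nπ + π/2), and let D > 0. Then lim_{t→0⁺} (4πDt)^{3/2} · [ 3/(4π) + (1/2π) ∑_{n=1}^∞ (1+kₙ²) e^{−Dkₙ² t} ] = 1; that is, the on-diagonal Neumann heat kernel of the unit ball at the origin, G(0,0,t), behaves like the free-space Gaussian value (4πDt)^{−3/2} as t → 0⁺. -/
/-!
Put `s = √(D t)`. On `[n π s, (n + 1) π s)`, `n ≥ 1`, let a step function take the value
`(s² + y²) e^{-y²}` at the tag `y = s kₙ`; its integral is `π s³ ∑ₙ (1 + kₙ²) e^{-s² kₙ²}`.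
Every tag lies within `π s` of each point of its interval, so as `s → 0⁺` the step functions
converge pointwise to `x² e^{-x²}` on `(0, ∞)` (and vanish on `(-∞, 0]`) while staying below
a fixed Gaussian. Dominated convergence gives `(D t)^{3/2} ∑ₙ (1 + kₙ²) e^{-D kₙ² t} → √π / (4π)`;
the constant term `3 / (4π)` is negligible, and `(4π)^{3/2} · √π / (8π²) = 1`.
-/

open Real MeasureTheory Filter Set Topology

theorem integral_Ioi_sq_mul_exp_neg_sq :
    ∫ x in Ioi (0 : ℝ), x ^ 2 * exp (-x ^ 2) = √π / 4 := by
  have h := integral_rpow_mul_exp_neg_rpow (p := 2) (q := 2) two_pos (by norm_num)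
  rw [show ((2 : ℝ) + 1) / 2 = 1 / 2 + 1 by norm_num, Gamma_add_one (by norm_num),
    Gamma_one_half_eq] at h
  simp only [rpow_ofNat] at h
  linarith

theorem sq_add_sq_mul_exp_neg_sq_le {s y : ℝ} (hs : s ^ 2 ≤ 1) :
    (s ^ 2 + y ^ 2) * exp (-y ^ 2) ≤ 2 * exp (-y ^ 2 / 2) := by
  have h := add_one_le_exp (y ^ 2 / 2)
  calc (s ^ 2 + y ^ 2) * exp (-y ^ 2) ≤ 2 * exp (y ^ 2 / 2) * exp (-y ^ 2) := by
        gcongr; linarith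
    _ = 2 * exp (-y ^ 2 / 2) := by rw [mul_assoc, ← exp_add]; ring_nf

theorem exp_neg_sq_div_two_le {L x y : ℝ} (hx : 0 ≤ x) (hxy : x - L ≤ y) :
    exp (-y ^ 2 / 2) ≤ exp (L ^ 2 / 2) * exp (-(1 / 4) * x ^ 2) := by
  rw [← exp_add, exp_le_exp]
  rcases le_total L x with h | h
  · nlinarith [sq_nonneg (x - 2 * L)]
  · nlinarith [sq_nonneg y]

theorem tendsto_sqrt_nhdsGT_zero : Tendsto sqrt (𝓝[>] 0) (𝓝[>] 0) := by
  have h := continuous_sqrt.continuousWithinAt.tendsto_nhdsWithin (s := Ioi 0) (x := 0)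
    (t := Ioi 0) fun _ hx => sqrt_pos.2 hx
  rwa [sqrt_zero] at h

noncomputable def riemannTag (k : ℕ → ℝ) (L s x : ℝ) : ℝ := s * k ⌊x / (L * s)⌋₊

noncomputable def riemannStep (k : ℕ → ℝ) (L s x : ℝ) : ℝ :=
  if 1 ≤ ⌊x / (L * s)⌋₊ then
    (s ^ 2 + riemannTag k L s x ^ 2) * exp (-riemannTag k L s x ^ 2)
  else 0

section RiemannStep

variable {k : ℕ → ℝ} {L s x : ℝ}

theorem abs_riemannTag_sub_le (hL : 0 < L)
    (hk : ∀ n : ℕ, 1 ≤ n → k n ∈ Icc (n * L) ((n + 1) * L))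
    (hs : 0 < s) (hm : 1 ≤ ⌊x / (L * s)⌋₊) : |riemannTag k L s x - x| ≤ L * s := by
  have hLs : 0 < L * s := mul_pos hL hs
  set m := ⌊x / (L * s)⌋₊
  have hx : 0 ≤ x / (L * s) := le_trans zero_le_one ((Nat.one_le_floor_iff _).1 hm)
  have hlo : m * (L * s) ≤ x := (le_div_iff₀ hLs).1 (Nat.floor_le hx)
  have hhi : x < (m + 1) * (L * s) := (div_lt_iff₀ hLs).1 (Nat.lt_floor_add_one _)
  obtain ⟨hk₁, hk₂⟩ := hk m hm
  rw [riemannTag, abs_sub_le_iff]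
  constructor <;> nlinarith

theorem tendsto_riemannTag (hL : 0 < L)
    (hk : ∀ n : ℕ, 1 ≤ n → k n ∈ Icc (n * L) ((n + 1) * L))
    (hfloor : ∀ᶠ s in 𝓝[>] 0, 1 ≤ ⌊x / (L * s)⌋₊) :
    Tendsto (fun s => riemannTag k L s x) (𝓝[>] 0) (𝓝 x) := by
  have hs : Tendsto (fun s : ℝ => s) (𝓝[>] 0) (𝓝 0) := nhdsWithin_le_nhds
  have hLs : Tendsto (fun s => L * s) (𝓝[>] 0) (𝓝 0) := by simpa using hs.const_mul L
  have hsub := squeeze_zero_norm' (f := fun s => riemannTag k L s x - x)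
    (by filter_upwards [hfloor, self_mem_nhdsWithin] with s hm hs
        exact abs_riemannTag_sub_le hL hk hs hm) hLs
  simpa using hsub.add_const x

theorem riemannStep_nonneg : 0 ≤ riemannStep k L s x := by
  unfold riemannStep; split_ifs <;> positivity

theorem measurable_riemannStep : Measurable (riemannStep k L s) := by
  have hfloor : Measurable fun x : ℝ => ⌊x / (L * s)⌋₊ := (measurable_id.div_const _).nat_floor
  have htag : Measurable (riemannTag k L s) :=
    measurable_const.mul ((Measurable.of_discrete (f := k)).comp hfloor)
  exact Measurable.ite (measurableSet_le measurable_const hfloor)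
    (((measurable_const.pow_const 2).add (htag.pow_const 2)).mul (htag.pow_const 2).neg.exp)
    measurable_const

theorem riemannStep_of_floor_eq_zero (h : ⌊x / (L * s)⌋₊ = 0) : riemannStep k L s x = 0 := by
  simp [riemannStep, h]

theorem riemannStep_of_floor_eq_succ {n : ℕ} (h : ⌊x / (L * s)⌋₊ = n + 1) :
    riemannStep k L s x = s ^ 2 * ((1 + k (n + 1) ^ 2) * exp (-s ^ 2 * k (n + 1) ^ 2)) := by
  simp only [riemannStep, riemannTag, h, le_add_iff_nonneg_left, zero_le, if_true]
  ring_nf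

theorem riemannStep_le_gaussian (hL : 0 < L)
    (hk : ∀ n : ℕ, 1 ≤ n → k n ∈ Icc (n * L) ((n + 1) * L)) (hs : s ∈ Ioc 0 1) :
    riemannStep k L s x ≤ 2 * exp (L ^ 2 / 2) * exp (-(1 / 4) * x ^ 2) := by
  obtain ⟨hs₀, hs₁⟩ := hs
  unfold riemannStep
  split_ifs with hm
  · have htag := abs_sub_le_iff.1 (abs_riemannTag_sub_le hL hk hs₀ hm)
    have hx : 0 ≤ x := by
      have := (Nat.one_le_floor_iff _).1 hm
      rw [one_le_div (mul_pos hL hs₀)] at this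
      exact (mul_pos hL hs₀).le.trans this
    calc _ ≤ 2 * exp (-riemannTag k L s x ^ 2 / 2) := sq_add_sq_mul_exp_neg_sq_le (by nlinarith)
      _ ≤ 2 * (exp (L ^ 2 / 2) * exp (-(1 / 4) * x ^ 2)) := by
          gcongr; exact exp_neg_sq_div_two_le hx (by nlinarith)
      _ = _ := by ring
  · positivity

theorem integrable_riemannStep (hL : 0 < L)
    (hk : ∀ n : ℕ, 1 ≤ n → k n ∈ Icc (n * L) ((n + 1) * L)) (hs : s ∈ Ioc 0 1) :
    Integrable (riemannStep k L s) :=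
  ((integrable_exp_neg_mul_sq (by norm_num : (0 : ℝ) < 1 / 4)).const_mul _).mono'
    measurable_riemannStep.aestronglyMeasurable
    (ae_of_all _ fun _ => by
      rw [norm_of_nonneg riemannStep_nonneg]; exact riemannStep_le_gaussian hL hk hs)

theorem integral_riemannStep (hL : 0 < L) (hs : 0 < s) (hint : Integrable (riemannStep k L s)) :
    ∫ x, riemannStep k L s x =
      L * s ^ 3 * ∑' n : ℕ, (1 + k (n + 1) ^ 2) * exp (-s ^ 2 * k (n + 1) ^ 2) := by
  have hLs : 0 < L * s := mul_pos hL hs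
  set A : ℕ → Set ℝ := fun n => Ico ((n + 1) * (L * s)) ((n + 2) * (L * s))
  have floor_eq : ∀ n x, x ∈ A n → ⌊x / (L * s)⌋₊ = n + 1 := by
    rintro n x ⟨hlo, hhi⟩
    rw [Nat.floor_eq_iff (div_nonneg (by nlinarith) hLs.le), le_div_iff₀ hLs, div_lt_iff₀ hLs]
    push_cast
    constructor <;> linarith
  have support : ∀ x ∉ ⋃ n, A n, riemannStep k L s x = 0 := by
    intro x hx
    refine riemannStep_of_floor_eq_zero (by_contra fun hm => hx ?_)
    obtain ⟨n, hn⟩ := Nat.exists_eq_succ_of_ne_zero hm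
    have hx₀ : 0 ≤ x / (L * s) :=
      le_trans zero_le_one (Nat.floor_pos.1 (Nat.pos_of_ne_zero hm))
    have hlo := (le_div_iff₀ hLs).1 (hn ▸ Nat.floor_le hx₀)
    have hhi := (div_lt_iff₀ hLs).1 (hn ▸ Nat.lt_floor_add_one (x / (L * s)))
    push_cast at hlo hhi
    exact mem_iUnion.2 ⟨n, hlo, by linarith⟩
  have disjoint : Pairwise (Function.onFun Disjoint A) := fun i j hij =>
    Set.disjoint_left.2 fun x hi hj =>
      hij (by have := (floor_eq i x hi).symm.trans (floor_eq j x hj); omega)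
  calc ∫ x, riemannStep k L s x = ∫ x in ⋃ n, A n, riemannStep k L s x :=
        (setIntegral_eq_integral_of_forall_compl_eq_zero support).symm
    _ = ∑' n, ∫ x in A n, riemannStep k L s x :=
        integral_iUnion (fun _ => measurableSet_Ico) disjoint hint.integrableOn
    _ = ∑' n : ℕ, L * s ^ 3 * ((1 + k (n + 1) ^ 2) * exp (-s ^ 2 * k (n + 1) ^ 2)) := by
        refine tsum_congr fun n => ?_
        rw [setIntegral_congr_fun measurableSet_Ico
            fun x hx => riemannStep_of_floor_eq_succ (floor_eq n x hx),
          setIntegral_const, measureReal_def, Real.volume_Ico, smul_eq_mul,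
          ENNReal.toReal_ofReal (by nlinarith)]
        ring
    _ = _ := tsum_mul_left

theorem tendsto_riemannStep (hL : 0 < L)
    (hk : ∀ n : ℕ, 1 ≤ n → k n ∈ Icc (n * L) ((n + 1) * L)) (x : ℝ) :
    Tendsto (fun s => riemannStep k L s x) (𝓝[>] 0)
      (𝓝 ((Ioi 0).indicator (fun x => x ^ 2 * exp (-x ^ 2)) x)) := by
  rcases le_or_gt x 0 with hx | hx
  · rw [indicator_of_notMem (notMem_Ioi.2 hx)]
    refine tendsto_const_nhds.congr' (eventually_nhdsWithin_of_forall fun s hs => ?_)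
    exact (riemannStep_of_floor_eq_zero (Nat.floor_of_nonpos
      (div_nonpos_of_nonpos_of_nonneg hx (mul_pos hL hs).le))).symm
  · rw [indicator_of_mem (mem_Ioi.2 hx)]
    have hfloor : ∀ᶠ s in 𝓝[>] 0, 1 ≤ ⌊x / (L * s)⌋₊ := by
      filter_upwards [Ioo_mem_nhdsGT (div_pos hx hL)] with s ⟨hs₀, hs⟩
      rw [Nat.one_le_floor_iff, one_le_div (mul_pos hL hs₀)]
      rw [lt_div_iff₀ hL] at hs
      linarith
    have htag := tendsto_riemannTag hL hk hfloor
    have hs : Tendsto (fun s : ℝ => s) (𝓝[>] 0) (𝓝 0) := nhdsWithin_le_nhds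
    have hlim := ((hs.pow 2).add (htag.pow 2)).mul (htag.pow 2).neg.rexp
    simp only [ne_eq, OfNat.ofNat_ne_zero, not_false_eq_true, zero_pow, zero_add] at hlim
    refine hlim.congr' ?_
    filter_upwards [hfloor] with s hm
    rw [riemannStep, if_pos hm]

theorem tendsto_integral_riemannStep (hL : 0 < L)
    (hk : ∀ n : ℕ, 1 ≤ n → k n ∈ Icc (n * L) ((n + 1) * L)) :
    Tendsto (fun s => ∫ x, riemannStep k L s x) (𝓝[>] 0) (𝓝 (√π / 4)) := by
  rw [← integral_Ioi_sq_mul_exp_neg_sq, ← integral_indicator measurableSet_Ioi]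
  refine tendsto_integral_filter_of_dominated_convergence _
    (Eventually.of_forall fun _ => measurable_riemannStep.aestronglyMeasurable) ?_
    ((integrable_exp_neg_mul_sq (by norm_num : (0 : ℝ) < 1 / 4)).const_mul (2 * exp (L ^ 2 / 2)))
    (ae_of_all _ (tendsto_riemannStep hL hk))
  filter_upwards [Ioc_mem_nhdsGT zero_lt_one] with s hs
  exact ae_of_all _ fun x => by
    rw [norm_of_nonneg riemannStep_nonneg]; exact riemannStep_le_gaussian hL hk hs

end RiemannStep

theorem tendsto_rpow_mul_tsum_exp_neg_mul {k : ℕ → ℝ} {L : ℝ} (hL : 0 < L)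
    (hk : ∀ n : ℕ, 1 ≤ n → k n ∈ Icc (n * L) ((n + 1) * L)) :
    Tendsto (fun a : ℝ => a ^ ((3 : ℝ) / 2) *
        ∑' n : ℕ, (1 + k (n + 1) ^ 2) * exp (-a * k (n + 1) ^ 2))
      (𝓝[>] 0) (𝓝 (√π / (4 * L))) := by
  have h := ((tendsto_integral_riemannStep hL hk).comp tendsto_sqrt_nhdsGT_zero).div_const L
  rw [div_div] at h
  refine h.congr' ?_
  filter_upwards [Ioc_mem_nhdsGT zero_lt_one] with a ⟨ha₀, ha₁⟩
  have hs : √a ∈ Ioc 0 1 := ⟨sqrt_pos.2 ha₀, sqrt_le_one.2 ha₁⟩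
  rw [Function.comp_apply, integral_riemannStep hL hs.1 (integrable_riemannStep hL hk hs),
    sq_sqrt ha₀.le, rpow_div_two_eq_sqrt _ ha₀.le, rpow_ofNat]
  field_simp
  simp_rw [mul_comm a]

theorem four_pi_rpow_three_halves_mul :
    (4 * π) ^ ((3 : ℝ) / 2) * (1 / (2 * π) * (√π / (4 * π))) = 1 := by
  rw [rpow_div_two_eq_sqrt _ (by positivity), show (4 : ℝ) * π = 2 ^ 2 * π by norm_num,
    sqrt_mul (by positivity), sqrt_sq (by norm_num), rpow_ofNat]
  field_simp
  linear_combination (√π ^ 2 + π) * sq_sqrt pi_pos.le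

open Real in
/-- With kₙ the unique root of tan(k) = k in (nπ, nπ + π/2) and D > 0,
(4πDt)^{3/2} · G(0,0,t) → 1 as t → 0⁺, where
G(0,0,t) = 3/(4π) + (1/2π) ∑_{n≥1} (1+kₙ²) e^{−Dkₙ²t} is the on-diagonal
Neumann heat kernel of the unit ball at the origin. -/
theorem heat_kernel_short_time_diagonal (k : ℕ → ℝ)
    (hk : ∀ n : ℕ, 1 ≤ n →
      k n ∈ Set.Ioo (n * π) (n * π + π / 2) ∧ Real.tan (k n) = k n)
    (D : ℝ) (hD : 0 < D) :
    Filter.Tendsto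
      (fun t : ℝ => (4 * π * D * t) ^ ((3:ℝ) / 2) *
        (3 / (4 * π) + (1 / (2 * π)) *
          ∑' n : ℕ, (1 + k (n + 1) ^ 2) * Real.exp (-D * k (n + 1) ^ 2 * t)))
      (nhdsWithin 0 (Set.Ioi 0)) (nhds 1) := by
  have hk' : ∀ n : ℕ, 1 ≤ n → k n ∈ Icc (n * π) ((n + 1) * π) := fun n hn =>
    Icc_subset_Icc_right (by linarith [pi_pos]) (Ioo_subset_Icc_self (hk n hn).1)
  have hDt : Tendsto (D * ·) (𝓝[>] 0) (𝓝[>] 0) :=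
    tendsto_comap.mono_left (comap_mulLeft_nhdsGT_zero hD).ge
  have hsum := (tendsto_rpow_mul_tsum_exp_neg_mul pi_pos hk').comp hDt
  have hpow : Tendsto (fun t => (D * t) ^ ((3 : ℝ) / 2)) (𝓝[>] 0) (𝓝 0) := by
    have h₀ : Tendsto (fun y : ℝ => y ^ ((3 : ℝ) / 2)) (𝓝 0) (𝓝 0) := by
      simpa using (continuousAt_rpow_const 0 ((3 : ℝ) / 2) (by norm_num)).tendsto
    exact h₀.comp (hDt.mono_right nhdsWithin_le_nhds)
  have hlim := ((hpow.mul_const (3 / (4 * π))).add (hsum.const_mul (1 / (2 * π)))).const_mul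
    ((4 * π) ^ ((3 : ℝ) / 2))
  rw [zero_mul, zero_add, four_pi_rpow_three_halves_mul] at hlim
  refine hlim.congr' (eventually_nhdsWithin_of_forall fun t ht => ?_)
  have h_tsum : ∑' n : ℕ, (1 + k (n + 1) ^ 2) * exp (-(D * t) * k (n + 1) ^ 2) =
      ∑' n : ℕ, (1 + k (n + 1) ^ 2) * exp (-D * k (n + 1) ^ 2 * t) :=
    tsum_congr fun n => by ring_nf
  dsimp only [Function.comp_apply]
  rw [h_tsum, show 4 * π * D * t = 4 * π * (D * t) by ring,
    mul_rpow (by positivity) (mul_pos hD ht).le]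
  ring
end
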